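/- arXiv:2005.03120 — 3 statements merged into one kernel-verified Lean document; each statement's English description precedes it below -/
import Mathlib

section
/- Let P₁: min cᴴᵀxᴴ s.t. Aᴴxᴴ ≥ bᴴ, xᴴ ≥ 0, and for each feasible xᴴ let P₂(xᴴ): min cᴱᵀxᴱ s.t. Aᴱxᴱ ≥ bᴱ − Bᴱxᴴ, xᴱ ≥ 0. Assume both P₁ and P₂(x*) (for x* optimal in P₁) are feasible and bounded. Then for γ ∈ (0,1), any optimal solution (xᴴ, xᴱ) of the weighted problem min γ·cᴴᵀxᴴ + (1−γ)·cᴱᵀxᴱ over the joint feasible set {Aᴴxᴴ ≥ bᴴ, Aᴱxᴱ + Bᴱxᴴ ≥ bᴱ, xᴴ, xᴱ ≥ 0} satisfies: as γ → 1, cᴴᵀxᴴ(γ) converges to the optimal value of P₁. -/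
open Matrix

set_option maxHeartbeats 1000000 in

/-- Scalarization of the lexicographic bilevel LP: as the weight `γ` tends to `1`,
the heat-cost component of any optimal solution of the weighted joint problem
converges to the optimal value `V1` of the priority problem `P₁`. -/
theorem weighted_scalarization_converges {nH nE mH mE : ℕ}
    (cH : Fin nH → ℝ) (AH : Matrix (Fin mH) (Fin nH) ℝ) (bH : Fin mH → ℝ)
    (cE : Fin nE → ℝ) (AE : Matrix (Fin mE) (Fin nE) ℝ) (BE : Matrix (Fin mE) (Fin nH) ℝ)
    (bE : Fin mE → ℝ) (V1 : ℝ)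
    (hV1 : IsLeast {v : ℝ | ∃ xH : Fin nH → ℝ, (bH ≤ AH.mulVec xH ∧ 0 ≤ xH) ∧ v = cH ⬝ᵥ xH} V1)
    (hP2 : ∀ xhat : Fin nH → ℝ, (bH ≤ AH.mulVec xhat ∧ 0 ≤ xhat) → cH ⬝ᵥ xhat = V1 →
      ∃ V2 : ℝ, IsLeast {v : ℝ | ∃ xE : Fin nE → ℝ,
        (bE - BE.mulVec xhat ≤ AE.mulVec xE ∧ 0 ≤ xE) ∧ v = cE ⬝ᵥ xE} V2) :
    ∀ ε : ℝ, 0 < ε → ∃ γ₀ : ℝ, γ₀ ∈ Set.Ioo (0:ℝ) 1 ∧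
      ∀ γ : ℝ, γ ∈ Set.Ioo γ₀ 1 →
      ∀ xH : Fin nH → ℝ, ∀ xE : Fin nE → ℝ,
        (bH ≤ AH.mulVec xH ∧ bE ≤ AE.mulVec xE + BE.mulVec xH ∧ 0 ≤ xH ∧ 0 ≤ xE) →
        (∀ xH' : Fin nH → ℝ, ∀ xE' : Fin nE → ℝ,
          (bH ≤ AH.mulVec xH' ∧ bE ≤ AE.mulVec xE' + BE.mulVec xH' ∧ 0 ≤ xH' ∧ 0 ≤ xE') →
          γ * (cH ⬝ᵥ xH) + (1 - γ) * (cE ⬝ᵥ xE) ≤ γ * (cH ⬝ᵥ xH') + (1 - γ) * (cE ⬝ᵥ xE')) →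
        |cH ⬝ᵥ xH - V1| < ε := by
  intro ε hε
  by_contra hcon
  push_neg at hcon
  obtain ⟨⟨xstar, hxsf, hxsv⟩, hV1lb⟩ := hV1
  obtain ⟨V2, ⟨xEstar, hEf, hEv⟩, hV2lb⟩ := hP2 xstar hxsf hxsv.symm
  have hjfeas_star : bH ≤ AH.mulVec xstar ∧
      bE ≤ AE.mulVec xEstar + BE.mulVec xstar ∧ 0 ≤ xstar ∧ 0 ≤ xEstar :=
    ⟨hxsf.1, sub_le_iff_le_add.mp hEf.1, hxsf.2, hEf.2⟩
  have hlow : ∀ xH' : Fin nH → ℝ, bH ≤ AH.mulVec xH' → 0 ≤ xH' → V1 ≤ cH ⬝ᵥ xH' :=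
    fun xH' h1 h2 => hV1lb ⟨xH', ⟨h1, h2⟩, rfl⟩
  -- a bad minimizer at some γm ∈ (1/2, 1)
  obtain ⟨γm, hγm, xHm, xEm, feasm, optm, _badm⟩ :=
    hcon (1/2) ⟨by norm_num, by norm_num⟩
  obtain ⟨hm, hhm⟩ : ∃ x : ℝ, cH ⬝ᵥ xHm = x := ⟨_, rfl⟩
  obtain ⟨em, hem⟩ : ∃ x : ℝ, cE ⬝ᵥ xEm = x := ⟨_, rfl⟩
  rw [hhm, hem] at optm
  obtain ⟨δ, hδ⟩ : ∃ x : ℝ, x = 1 - γm := ⟨_, rfl⟩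
  have hδpos : 0 < δ := by rw [hδ]; linarith [hγm.2]
  have hδlt : δ < 1/2 := by rw [hδ]; linarith [hγm.1]
  obtain ⟨Vm, hVm⟩ : ∃ x : ℝ, x = γm * hm + δ * em := ⟨_, rfl⟩
  obtain ⟨C, hC⟩ : ∃ x : ℝ, x = γm * V1 + δ * V2 - Vm := ⟨_, rfl⟩
  obtain ⟨K, hK⟩ : ∃ x : ℝ, x = 2 * C / δ := ⟨_, rfl⟩
  have hKδ : δ * K = 2 * C := by rw [hK]; field_simp
  have hKabs : 0 < |K| + 1 := by positivity
  obtain ⟨r, hr⟩ : ∃ x : ℝ, x = min (δ/4) (ε/(2*(|K|+1))) := ⟨_, rfl⟩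
  have hrpos : 0 < r := by rw [hr]; exact lt_min (by linarith) (by positivity)
  have hr1 : r ≤ δ/4 := hr ▸ min_le_left _ _
  have hr2 : r * (2 * (|K| + 1)) ≤ ε := by
    have h := hr ▸ min_le_right (δ/4) (ε/(2*(|K|+1)))
    exact (le_div_iff₀ (by positivity)).mp h
  -- a bad minimizer at some γn ∈ (1-r, 1)
  obtain ⟨γn, hγn, xHn, xEn, feasn, optn, badn⟩ :=
    hcon (1-r) ⟨by linarith, by linarith⟩
  obtain ⟨hn, hhn⟩ : ∃ x : ℝ, cH ⬝ᵥ xHn = x := ⟨_, rfl⟩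
  obtain ⟨en, hen⟩ : ∃ x : ℝ, cE ⬝ᵥ xEn = x := ⟨_, rfl⟩
  rw [hhn, hen] at optn
  rw [hhn] at badn
  have hαpos : 0 < 1 - γn := by linarith [hγn.2]
  have hαr : 1 - γn < r := by linarith [hγn.1]
  have hγn12 : (1/2:ℝ) ≤ γn := by linarith
  have hγm1 : γm ≤ 1 := le_of_lt hγm.2
  have hV1n : V1 ≤ hn := hhn ▸ hlow xHn feasn.1 feasn.2.2.1
  have hεn : ε ≤ hn - V1 := by
    rwa [abs_of_nonneg (by linarith)] at badn
  have hopt_star : γn * hn + (1 - γn) * en ≤ γn * V1 + (1 - γn) * V2 := by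
    have h := optn xstar xEstar hjfeas_star
    rw [← hxsv, ← hEv] at h
    linarith
  obtain ⟨s, hs⟩ : ∃ x : ℝ, x = V2 - en := ⟨_, rfl⟩
  -- optimality of n against the lexicographic point
  have hB : γn * (hn - V1) ≤ (1 - γn) * s := by rw [hs]; nlinarith [hopt_star]
  have hA : γn * ε ≤ (1 - γn) * s := by
    nlinarith [mul_le_mul_of_nonneg_left hεn (by linarith : (0:ℝ) ≤ γn)]
  have hspos : 0 < s := by
    by_contra h
    push_neg at h
    have h1 : (1 - γn) * s ≤ 0 := mul_nonpos_of_nonneg_of_nonpos hαpos.le h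
    nlinarith
  -- (1-γn)*(|K|+1) < ε/2 ≤ (1-γn)*s  ⇒  s > |K|+1
  have hsK : |K| + 1 < s := by
    have h1 : (1 - γn) * (|K| + 1) < r * (|K| + 1) :=
      mul_lt_mul_of_pos_right hαr hKabs
    have h2 : ε / 2 ≤ (1 - γn) * s := by nlinarith
    have h3 : (1 - γn) * (|K| + 1) < (1 - γn) * s := by linarith
    exact lt_of_mul_lt_mul_left h3 hαpos.le
  -- chain of bounds
  have hb1 : γm * (hn - V1) ≤ hn - V1 := by
    nlinarith [mul_le_mul_of_nonneg_right hγm1 (by linarith : (0:ℝ) ≤ hn - V1)]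
  have hb2 : hn - V1 ≤ 2 * ((1 - γn) * s) := by
    nlinarith [mul_le_mul_of_nonneg_right hγn12 (by linarith : (0:ℝ) ≤ hn - V1)]
  have hb3 : 2 * ((1 - γn) * s) ≤ (δ/2) * s := by
    have h4 : 2 * (1 - γn) ≤ δ/2 := by linarith
    nlinarith
  have hb4 : C < (δ/2) * s := by
    have h1 : (δ/2) * K ≤ (δ/2) * |K| := by nlinarith [le_abs_self K]
    have h2 : (δ/2) * (|K|+1) < (δ/2) * s := by nlinarith
    nlinarith
  have hfinal : γm * hn + δ * en < Vm := by
    have hexp : γm * hn + δ * en = γm * V1 + δ * V2 + γm * (hn - V1) - δ * s := by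
      rw [hs]; ring
    nlinarith
  have hoptm := optm xHn xEn feasn
  rw [hhn, hen] at hoptm
  rw [← hδ] at hoptm
  linarith [hVm]
end

section
/- Minimum up-time constraint correctness: let u : ℤ → {0,1} and v⁺(t) = max(u(t) − u(t−1), 0). Fix an integer L ≥ 1. Then the family of constraints ∑_{k=t−L+1}^{t} v⁺(k) ≤ u(t) for all t holds if and only if the sequence u satisfies the minimum up-time property: whenever u switches from 0 to 1 at time s (i.e., u(s−1)=0, u(s)=1), then u(k) = 1 for all k with s ≤ k ≤ s+L−1. -/
/-- Correctness of the minimum up-time constraints: the constraints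
`∑_{k=t−L+1}^{t} v⁺(k) ≤ u(t)` hold for all `t` iff every start-up is followed by
at least `L` consecutive on-periods. -/
theorem min_up_time_correct (u : ℤ → ℝ) (L : ℤ)
    (hu : ∀ t : ℤ, u t = 0 ∨ u t = 1) (hL : 1 ≤ L) :
    (∀ t : ℤ, (∑ k ∈ Finset.Icc (t - L + 1) t, max (u k - u (k - 1)) 0) ≤ u t) ↔
    (∀ s : ℤ, u (s - 1) = 0 → u s = 1 → ∀ k : ℤ, s ≤ k → k ≤ s + L - 1 → u k = 1) := by
  have hterm : ∀ k : ℤ, max (u k - u (k-1)) 0 = if u (k-1) = 0 ∧ u k = 1 then 1 else 0 := by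
    intro k
    rcases hu (k-1) with h1 | h1 <;> rcases hu k with h2 | h2 <;>
      simp [h1, h2] <;> norm_num
  have hnonneg : ∀ k : ℤ, 0 ≤ max (u k - u (k-1)) 0 := fun k => le_max_right _ _
  constructor
  · intro hc s hs0 hs1 k hk1 hk2
    have hmem : s ∈ Finset.Icc (k - L + 1) k := by
      rw [Finset.mem_Icc]; omega
    have h1 : (1:ℝ) ≤ ∑ j ∈ Finset.Icc (k - L + 1) k, max (u j - u (j-1)) 0 := by
      have := Finset.single_le_sum (f := fun j => max (u j - u (j-1)) 0)
        (fun j _ => hnonneg j) hmem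
      simpa [hs0, hs1] using this
    have h2 := hc k
    rcases hu k with h | h
    · linarith
    · exact h
  · intro hm t
    by_cases hex : ∃ s ∈ Finset.Icc (t - L + 1) t, u (s-1) = 0 ∧ u s = 1
    · obtain ⟨s, hsmem, hs0, hs1⟩ := hex
      rw [Finset.mem_Icc] at hsmem
      have hut : u t = 1 := hm s hs0 hs1 t hsmem.2 (by omega)
      have hsum : ∑ j ∈ Finset.Icc (t - L + 1) t, max (u j - u (j-1)) 0 = 1 := by
        rw [Finset.sum_eq_single_of_mem s (Finset.mem_Icc.mpr hsmem)]
        · rw [hterm, if_pos ⟨hs0, hs1⟩]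
        · intro b hb hbs
          rw [Finset.mem_Icc] at hb
          rw [hterm, if_neg]
          rintro ⟨hb0, hb1⟩
          rcases lt_or_gt_of_ne hbs with h | h
          · have := hm b hb0 hb1 (s-1) (by omega) (by omega)
            exact absurd this (by rw [hs0]; norm_num)
          · have := hm s hs0 hs1 (b-1) (by omega) (by omega)
            exact absurd this (by rw [hb0]; norm_num)
      rw [hsum, hut]
    · push_neg at hex
      have hsum : ∑ j ∈ Finset.Icc (t - L + 1) t, max (u j - u (j-1)) 0 = 0 := by
        apply Finset.sum_eq_zero
        intro j hj
        rw [hterm, if_neg (by have := hex j hj; tauto)]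
      rw [hsum]
      rcases hu t with h | h <;> simp [h]
end

section
/- Weighted-sum approximation with fixed lower-level optimality: in the setting of the two-stage LPs P₁ and P₂(·) (both feasible and bounded, with optimal values V₁ and V₂(xᴴ)), for every γ ∈ (0,1) any optimal solution (xᴴ_γ, xᴱ_γ) of the weighted joint problem satisfies cᴴᵀxᴴ_γ ≤ V₁ + ((1−γ)/γ)·(V₂(x̂) − cᴱᵀxᴱ_γ) for any optimal x̂ of P₁; in particular, if cᴱᵀxᴱ is bounded below by some m over the joint feasible set, then cᴴᵀxᴴ_γ − V₁ ≤ ((1−γ)/γ)·(V₂(x̂) − m), which tends to 0 as γ → 1. -/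
open Matrix Filter

/-- Quantitative bound for the weighted-sum (lexicographic scalarization) approximation:
for `γ ∈ (0,1)`, any optimal solution of the weighted joint problem has heat cost within
`((1−γ)/γ)·(V₂(x̂) − cᴱᵀxᴱ_γ)` of the optimal value `V₁` of `P₁`; under a lower bound `m`
on `cᴱᵀxᴱ`, the gap is at most `((1−γ)/γ)·(V₂(x̂) − m)`, which tends to `0` as `γ → 1`. -/
theorem weighted_scalarization_bound {nH nE mH mE : ℕ}
    (cH : Fin nH → ℝ) (AH : Matrix (Fin mH) (Fin nH) ℝ) (bH : Fin mH → ℝ)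
    (cE : Fin nE → ℝ) (AE : Matrix (Fin mE) (Fin nE) ℝ) (BE : Matrix (Fin mE) (Fin nH) ℝ)
    (bE : Fin mE → ℝ) (V1 V2 : ℝ) (γ : ℝ) (hγ : γ ∈ Set.Ioo (0:ℝ) 1)
    (xhat : Fin nH → ℝ)
    (hV1 : IsLeast {v : ℝ | ∃ xH : Fin nH → ℝ, (bH ≤ AH.mulVec xH ∧ 0 ≤ xH) ∧ v = cH ⬝ᵥ xH} V1)
    (hxhat : (bH ≤ AH.mulVec xhat ∧ 0 ≤ xhat) ∧ cH ⬝ᵥ xhat = V1)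
    (hV2 : IsLeast {v : ℝ | ∃ xE : Fin nE → ℝ,
      (bE ≤ AE.mulVec xE + BE.mulVec xhat ∧ 0 ≤ xE) ∧ v = cE ⬝ᵥ xE} V2)
    (xHg : Fin nH → ℝ) (xEg : Fin nE → ℝ)
    (hfeas : bH ≤ AH.mulVec xHg ∧ bE ≤ AE.mulVec xEg + BE.mulVec xHg ∧ 0 ≤ xHg ∧ 0 ≤ xEg)
    (hopt : ∀ xH : Fin nH → ℝ, ∀ xE : Fin nE → ℝ,
      (bH ≤ AH.mulVec xH ∧ bE ≤ AE.mulVec xE + BE.mulVec xH ∧ 0 ≤ xH ∧ 0 ≤ xE) →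
      γ * (cH ⬝ᵥ xHg) + (1 - γ) * (cE ⬝ᵥ xEg) ≤ γ * (cH ⬝ᵥ xH) + (1 - γ) * (cE ⬝ᵥ xE)) :
    cH ⬝ᵥ xHg ≤ V1 + ((1 - γ) / γ) * (V2 - cE ⬝ᵥ xEg) ∧
    (∀ m : ℝ,
      (∀ xH : Fin nH → ℝ, ∀ xE : Fin nE → ℝ,
        (bH ≤ AH.mulVec xH ∧ bE ≤ AE.mulVec xE + BE.mulVec xH ∧ 0 ≤ xH ∧ 0 ≤ xE) →
        m ≤ cE ⬝ᵥ xE) →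
      cH ⬝ᵥ xHg - V1 ≤ ((1 - γ) / γ) * (V2 - m) ∧
      Tendsto (fun g : ℝ => ((1 - g) / g) * (V2 - m)) (nhdsWithin 1 (Set.Iio 1)) (nhds 0)) := by
  obtain ⟨hγ0, hγ1⟩ := hγ
  obtain ⟨⟨xE2, hxE2feas, hxE2val⟩, _⟩ := hV2
  have hjoint : bH ≤ AH.mulVec xhat ∧ bE ≤ AE.mulVec xE2 + BE.mulVec xhat ∧
      0 ≤ xhat ∧ 0 ≤ xE2 := ⟨hxhat.1.1, hxE2feas.1, hxhat.1.2, hxE2feas.2⟩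
  have hkey := hopt xhat xE2 hjoint
  rw [hxhat.2, ← hxE2val] at hkey
  have hbound : cH ⬝ᵥ xHg ≤ V1 + ((1 - γ) / γ) * (V2 - cE ⬝ᵥ xEg) := by
    rw [div_mul_eq_mul_div, ← sub_le_iff_le_add', le_div_iff₀ hγ0]
    nlinarith [hkey]
  refine ⟨hbound, fun m hm => ⟨?_, ?_⟩⟩
  · have hmle : m ≤ cE ⬝ᵥ xEg := hm xHg xEg hfeas
    have h2 : ((1 - γ) / γ) * (V2 - cE ⬝ᵥ xEg) ≤ ((1 - γ) / γ) * (V2 - m) := by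
      apply mul_le_mul_of_nonneg_left (by linarith) (by apply div_nonneg <;> linarith)
    linarith
  · have hc : ContinuousAt (fun g : ℝ => ((1 - g) / g) * (V2 - m)) 1 := by
      apply ContinuousAt.mul _ continuousAt_const
      exact ((continuousAt_const.sub continuousAt_id).div continuousAt_id (by norm_num))
    have := hc.tendsto.mono_left (nhdsWithin_le_nhds (s := Set.Iio 1))
    simpa using this
end
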